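/- Let X be a set, k : X → X → ℝ a symmetric positive semidefinite kernel, γ > 0, and Z₁,…,Z_L finite tuples of points of X. Suppose x, x' ∈ X satisfy k(x,x) > 0, k(x',x') = 0, and the covariance vector v(x,Zₗ) is nonzero for every l ∈ {1,…,L}. Then the LES acquisition function satisfies α(x) > α(x') and α(x') = 0. -/

import Mathlib

open Matrix

/-- A kernel `k : X → X → ℝ` is (symmetric) positive semidefinite. -/
def IsPSDKernel {X : Type*} (k : X → X → ℝ) : Prop :=
  (∀ x y, k x y = k y x) ∧
  ∀ (n : ℕ) (x : Fin n → X) (c : Fin n → ℝ),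
    0 ≤ ∑ i, ∑ j, c i * c j * k (x i) (x j)

/-- Gram matrix `K(Z)ᵢⱼ = k(zᵢ, zⱼ)` of a kernel at a finite tuple of points. -/
noncomputable def gramMatrix {X : Type*} (k : X → X → ℝ) {m : ℕ} (Z : Fin m → X) :
    Matrix (Fin m) (Fin m) ℝ :=
  fun i j => k (Z i) (Z j)

/-- Covariance vector `v(x,Z)ᵢ = k(x, zᵢ)` between a query point and a tuple of points. -/
noncomputable def covVec {X : Type*} (k : X → X → ℝ) {m : ℕ} (x : X) (Z : Fin m → X) :
    Fin m → ℝ :=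
  fun i => k x (Z i)

/-- Conditional (posterior) variance
`s(x,Z) = k(x,x) − v(x,Z)ᵀ (K(Z) + γ²I)⁻¹ v(x,Z)`. -/
noncomputable def condVar {X : Type*} (k : X → X → ℝ) (γ : ℝ) {m : ℕ}
    (x : X) (Z : Fin m → X) : ℝ :=
  k x x -
    covVec k x Z ⬝ᵥ ((gramMatrix k Z + γ ^ 2 • (1 : Matrix (Fin m) (Fin m) ℝ))⁻¹ *ᵥ covVec k x Z)

/-- The LES acquisition function
`α(x) = ½ log(2πe(k(x,x)+γ²)) − (1/L) ∑ₗ ½ log(2πe(s(x,Zₗ)+γ²))`. -/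
noncomputable def lesAcq {X : Type*} (k : X → X → ℝ) (γ : ℝ) {L : ℕ} {m : Fin L → ℕ}
    (Z : (l : Fin L) → Fin (m l) → X) (x : X) : ℝ :=
  (1 / 2) * Real.log (2 * Real.pi * Real.exp 1 * (k x x + γ ^ 2)) -
    (1 / (L : ℝ)) *
      ∑ l, (1 / 2) * Real.log (2 * Real.pi * Real.exp 1 * (condVar k γ x (Z l) + γ ^ 2))

lemma kzero {X : Type*} {k : X → X → ℝ} (hk : IsPSDKernel k) {x : X}
    (hx : k x x = 0) (y : X) : k x y = 0 := by
  by_contra h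
  have ht := hk.2 2 ![x, y] ![-(k y y + 1)/(2 * k x y), 1]
  simp [Fin.sum_univ_two, hx, hk.1 y x] at ht
  set a := k x y
  set b := k y y
  have h2 : (-1 + -b) / (2 * a) * a = (-1 + -b) / 2 := by
    field_simp
  rw [h2] at ht
  linarith

lemma gram_psd {X : Type*} {k : X → X → ℝ} (hk : IsPSDKernel k) {m : ℕ} (Z : Fin m → X) :
    (gramMatrix k Z).PosSemidef := by
  refine Matrix.PosSemidef.of_dotProduct_mulVec_nonneg ?_ ?_
  · ext i j
    simp [gramMatrix, conjTranspose_apply, hk.1 (Z j) (Z i)]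
  · intro c
    have key : star c ⬝ᵥ (gramMatrix k Z *ᵥ c) = ∑ i, ∑ j, c i * c j * k (Z i) (Z j) := by
      simp only [dotProduct, mulVec, star_trivial, Pi.star_apply, gramMatrix, Finset.mul_sum]
      exact Finset.sum_congr rfl fun i _ => Finset.sum_congr rfl fun j _ => by ring
    rw [key]; exact hk.2 m Z c

lemma A_posdef {X : Type*} {k : X → X → ℝ} (hk : IsPSDKernel k) {γ : ℝ} (hγ : 0 < γ)
    {m : ℕ} (Z : Fin m → X) :
    (gramMatrix k Z + γ ^ 2 • (1 : Matrix (Fin m) (Fin m) ℝ)).PosDef := by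
  refine Matrix.PosDef.posSemidef_add (gram_psd hk Z) ?_
  refine Matrix.PosDef.of_dotProduct_mulVec_pos ?_ ?_
  · ext i j
    simp [conjTranspose_apply, one_apply]
    split <;> simp_all [eq_comm]
  · intro y hy
    rw [smul_mulVec, one_mulVec, dotProduct_smul]
    have : 0 < star y ⬝ᵥ y := dotProduct_star_self_pos_iff.2 hy
    positivity

lemma condVar_bounds {X : Type*} {k : X → X → ℝ} (hk : IsPSDKernel k) {γ : ℝ} (hγ : 0 < γ)
    {m : ℕ} (x : X) (Z : Fin m → X) :
    0 ≤ condVar k γ x Z ∧ (covVec k x Z ≠ 0 → condVar k γ x Z < k x x) := by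
  set v := covVec k x Z with hvdef
  set A := gramMatrix k Z + γ ^ 2 • (1 : Matrix (Fin m) (Fin m) ℝ) with hAdef
  have hA : A.PosDef := A_posdef hk hγ Z
  set w := A⁻¹ *ᵥ v with hwdef
  have hAw : A *ᵥ w = v := by
    rw [hwdef, mulVec_mulVec, Matrix.mul_nonsing_inv _ hA.det_pos.ne'.isUnit, one_mulVec]
  have hq := hk.2 (m + 1) (Fin.cons x Z) (Fin.cons 1 (fun i => -(w i)))
  have hsum : (∑ i, ∑ j, (Fin.cons 1 (fun i => -(w i)) : Fin (m+1) → ℝ) i *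
        (Fin.cons 1 (fun i => -(w i)) : Fin (m+1) → ℝ) j *
        k ((Fin.cons x Z : Fin (m+1) → X) i) ((Fin.cons x Z : Fin (m+1) → X) j)) =
      k x x - 2 * (v ⬝ᵥ w) + w ⬝ᵥ (gramMatrix k Z *ᵥ w) := by
    simp only [Fin.sum_univ_succ, Fin.cons_zero, Fin.cons_succ, one_mul, mul_one, neg_mul,
      mul_neg, neg_neg, dotProduct, mulVec, gramMatrix, Finset.mul_sum]
    have hsym : ∀ i, k (Z i) x = k x (Z i) := fun i => hk.1 (Z i) x
    simp only [hsym]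
    rw [Finset.sum_add_distrib]
    have hv' : ∀ i, v i = k x (Z i) := fun i => rfl
    simp only [hv']
    ring_nf
    have l1 : (∑ i, -(w i * k x (Z i))) * 2 = ∑ i, -(2 * k x (Z i) * w i) := by
      rw [Finset.sum_mul]; exact Finset.sum_congr rfl fun i _ => by ring
    have l2 : (∑ i, ∑ j, w i * w j * k (Z i) (Z j)) = ∑ i, ∑ j, w i * k (Z i) (Z j) * w j :=
      Finset.sum_congr rfl fun i _ => Finset.sum_congr rfl fun j _ => by ring
    rw [l1, l2, Finset.sum_neg_distrib]
    ring
  have hgw : w ⬝ᵥ (gramMatrix k Z *ᵥ w) = v ⬝ᵥ w - γ ^ 2 * (w ⬝ᵥ w) := by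
    have : gramMatrix k Z *ᵥ w = A *ᵥ w - γ ^ 2 • w := by
      rw [hAdef, add_mulVec, smul_mulVec, one_mulVec]
      abel
    rw [this, hAw, dotProduct_sub, dotProduct_smul, dotProduct_comm w v, smul_eq_mul]
  have hkey : 0 ≤ k x x - v ⬝ᵥ w - γ ^ 2 * (w ⬝ᵥ w) := by
    rw [hsum, hgw] at hq; linarith
  have hww : 0 ≤ w ⬝ᵥ w := by
    have := dotProduct_star_self_nonneg w; simpa using this
  have hcv : condVar k γ x Z = k x x - v ⬝ᵥ w := rfl
  constructor
  · rw [hcv]; nlinarith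
  · intro hv
    rw [hcv]
    have hpos : 0 < v ⬝ᵥ w := by
      have := hA.inv.dotProduct_mulVec_pos hv
      simpa [hwdef] using this
    linarith

/-- if `k(x,x) > 0`, `k(x',x') = 0`, and `v(x,Zₗ) ≠ 0` for each `l`,
then `α(x) > α(x')` and `α(x') = 0`. -/
theorem lesAcq_gt_of_pos_variance {X : Type*} (k : X → X → ℝ) (hk : IsPSDKernel k)
    (γ : ℝ) (hγ : 0 < γ) {L : ℕ} (hL : 0 < L) {m : Fin L → ℕ}
    (Z : (l : Fin L) → Fin (m l) → X) (x x' : X)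
    (hx : 0 < k x x) (hx' : k x' x' = 0)
    (hv : ∀ l, covVec k x (Z l) ≠ 0) :
    lesAcq k γ Z x' < lesAcq k γ Z x ∧ lesAcq k γ Z x' = 0 := by
  have hLne : (L : ℝ) ≠ 0 := Nat.cast_ne_zero.2 hL.ne'
  have hcv0 : ∀ l, condVar k γ x' (Z l) = 0 := fun l => by
    have hcov0 : covVec k x' (Z l) = 0 := funext fun i => kzero hk hx' (Z l i)
    simp [condVar, covVec] at hcov0 ⊢
    simp [hcov0, hx']
  have hαx' : lesAcq k γ Z x' = 0 := by
    simp only [lesAcq, hcv0, hx', zero_add, Finset.sum_const, Finset.card_univ,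
      Fintype.card_fin, nsmul_eq_mul]
    field_simp
    ring
  refine ⟨?_, hαx'⟩
  rw [hαx']
  have hepos : (0 : ℝ) < 2 * Real.pi * Real.exp 1 := by positivity
  set e := 2 * Real.pi * Real.exp 1 with hedef
  set C := Real.log (e * (k x x + γ ^ 2)) with hCdef
  have hlog : ∀ l, Real.log (e * (condVar k γ x (Z l) + γ ^ 2)) < C := by
    intro l
    obtain ⟨h0, hlt⟩ := condVar_bounds hk hγ x (Z l)
    have hlt' := hlt (hv l)
    apply Real.log_lt_log
    · have h1 : 0 < condVar k γ x (Z l) + γ ^ 2 := by nlinarith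
      exact mul_pos hepos h1
    · exact (mul_lt_mul_iff_right₀ hepos).2 (by linarith)
  have hsum : ∑ l, (1 / 2) * Real.log (e * (condVar k γ x (Z l) + γ ^ 2)) <
      ∑ _l : Fin L, (1 / 2) * C := by
    refine Finset.sum_lt_sum_of_nonempty ?_ fun l _ => by linarith [hlog l]
    haveI : Nonempty (Fin L) := ⟨⟨0, hL⟩⟩
    exact Finset.univ_nonempty
  have hsc : (∑ _l : Fin L, (1 / 2) * C) = L * ((1/2) * C) := by
    simp [Finset.sum_const, Finset.card_univ]
  have hLpos : (0 : ℝ) < L := by exact_mod_cast hL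
  have : (1 / (L : ℝ)) * ∑ l, (1 / 2) * Real.log (e * (condVar k γ x (Z l) + γ ^ 2)) <
      (1 / (L : ℝ)) * (L * ((1/2) * C)) := by
    apply mul_lt_mul_of_pos_left _ (by positivity)
    rw [← hsc]; exact hsum
  rw [show (1 / (L : ℝ)) * (L * ((1/2) * C)) = (1/2) * C by field_simp] at this
  simp only [lesAcq, ← hedef, ← hCdef]
  linarith
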